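/- With R = A ×_k B the fiber product of positively graded Noetherian k-algebras over the field k, for proper graded ideals I ⊊ A and J ⊊ B, the radical satisfies √(IR ⊕ JR) = √(IR) ⊕ √(JR) = √I·R ⊕ √J·R. -/

import Mathlib

noncomputable section

/-- The fiber product `A ×ₖ B = {(a,b) : f a = g b}`, as a subalgebra of `A × B`. -/
def fiberProd {k A B : Type*} [CommSemiring k] [Semiring A] [Semiring B]
    [Algebra k A] [Algebra k B] (f : A →ₐ[k] k) (g : B →ₐ[k] k) : Subalgebra k (A × B) :=
  AlgHom.equalizer (f.comp (AlgHom.fst k A B)) (g.comp (AlgHom.snd k A B))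

/-- The canonical map `ι₁ : A → A ×ₖ B`, `a ↦ (a, f a)`. -/
def fiberProdInl {k A B : Type*} [CommSemiring k] [Semiring A] [Semiring B]
    [Algebra k A] [Algebra k B] (f : A →ₐ[k] k) (g : B →ₐ[k] k) :
    A →ₐ[k] fiberProd f g :=
  AlgHom.codRestrict ((AlgHom.id k A).prod ((Algebra.ofId k B).comp f)) (fiberProd f g)
    (fun a => by simp [fiberProd, AlgHom.mem_equalizer, Algebra.ofId_apply, AlgHom.commutes])

/-- The canonical map `ι₂ : B → A ×ₖ B`, `b ↦ (g b, b)`. -/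
def fiberProdInr {k A B : Type*} [CommSemiring k] [Semiring A] [Semiring B]
    [Algebra k A] [Algebra k B] (f : A →ₐ[k] k) (g : B →ₐ[k] k) :
    B →ₐ[k] fiberProd f g :=
  AlgHom.codRestrict (((Algebra.ofId k A).comp g).prod (AlgHom.id k B)) (fiberProd f g)
    (fun b => by simp [fiberProd, AlgHom.mem_equalizer, Algebra.ofId_apply, AlgHom.commutes])

/-!
A proper homogeneous ideal of a positively graded algebra whose degree-zero part is `k` lies in
the irrelevant ideal, hence in the kernel of the augmentation. Once `I ≤ ker f` and `J ≤ ker g`,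
the ideal `I·R + J·R` of `R = A ×ₖ B` is the preimage of `I × J` under the two projections.
Radicals commute with preimages and finite intersections, which gives
`√(IR + JR) = √I·R + √J·R`, while `IR ∩ JR = 0` because its elements have both coordinates zero.
-/

section Graded

open HomogeneousIdeal

variable {ι A : Type*} [DecidableEq ι] [AddCommMonoid ι] [PartialOrder ι]
  [CanonicallyOrderedAdd ι]

theorem HomogeneousIdeal.irrelevant_le_ker {σ S F : Type*} [CommSemiring A] [Semiring S]
    [SetLike σ A] [AddSubmonoidClass σ A] (𝒜 : ι → σ) [GradedRing 𝒜]
    [FunLike F A S] [RingHomClass F A S] (f : F) (hf : ∀ i, 0 < i → ∀ a ∈ 𝒜 i, f a = 0) :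
    (𝒜₊).toIdeal ≤ RingHom.ker f := by
  rw [irrelevant_eq_span, Ideal.span_le]
  simp only [Set.iUnion_subset_iff]
  exact hf

theorem Ideal.IsHomogeneous.le_irrelevant {k : Type*} [Field k] [CommRing A] [Algebra k A]
    {𝒜 : ι → Submodule k A} [GradedAlgebra 𝒜]
    (h𝒜 : 𝒜 0 ≤ LinearMap.range (Algebra.linearMap k A))
    {I : Ideal A} (hI : I ≠ ⊤) (hIhom : I.IsHomogeneous 𝒜) : I ≤ (𝒜₊).toIdeal := by
  intro a ha
  obtain ⟨c, hc⟩ := h𝒜 (SetLike.coe_mem (DirectSum.decompose 𝒜 a 0))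
  rw [Algebra.linearMap_apply] at hc
  rw [HomogeneousIdeal.mem_iff, mem_irrelevant_iff, GradedRing.proj_apply, ← hc]
  by_contra hne
  have hc0 : c ≠ 0 := by
    rintro rfl
    exact hne (map_zero _)
  exact hI (I.eq_top_of_isUnit_mem (hc ▸ hIhom 0 ha) ((isUnit_iff_ne_zero.mpr hc0).map _))

end Graded

section FiberProd

variable {k A B : Type*} [CommSemiring k] [CommRing A] [CommRing B] [Algebra k A] [Algebra k B]
  (f : A →ₐ[k] k) (g : B →ₐ[k] k)

def fiberProdFst : fiberProd f g →ₐ[k] A := (AlgHom.fst k A B).comp (fiberProd f g).val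

def fiberProdSnd : fiberProd f g →ₐ[k] B := (AlgHom.snd k A B).comp (fiberProd f g).val

@[simp] lemma fiberProdFst_apply (x : fiberProd f g) : fiberProdFst f g x = (x : A × B).1 := rfl

@[simp] lemma fiberProdSnd_apply (x : fiberProd f g) : fiberProdSnd f g x = (x : A × B).2 := rfl

@[simp] lemma coe_fiberProdInl (a : A) :
    (fiberProdInl f g a : A × B) = (a, algebraMap k B (f a)) := rfl

@[simp] lemma coe_fiberProdInr (b : B) :
    (fiberProdInr f g b : A × B) = (algebraMap k A (g b), b) := rfl

variable {f g} {I : Ideal A} {J : Ideal B}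

theorem map_fiberProdInl_sup_map_fiberProdInr (hI : I ≤ RingHom.ker f)
    (hJ : J ≤ RingHom.ker g) :
    I.map (fiberProdInl f g) ⊔ J.map (fiberProdInr f g) =
      I.comap (fiberProdFst f g) ⊓ J.comap (fiberProdSnd f g) := by
  refine le_antisymm (sup_le ?_ ?_) fun x ⟨hx₁, hx₂⟩ => ?_
  · refine Ideal.map_le_iff_le_comap.2 fun a ha => ⟨?_, ?_⟩
    · simpa using ha
    · simp [show f a = 0 from hI ha]
  · refine Ideal.map_le_iff_le_comap.2 fun b hb => ⟨?_, ?_⟩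
    · simp [show g b = 0 from hJ hb]
    · simpa using hb
  · have hx : x = fiberProdInl f g (x : A × B).1 + fiberProdInr f g (x : A × B).2 := by
      ext <;> simp [show f (x : A × B).1 = 0 from hI hx₁,
        show g (x : A × B).2 = 0 from hJ hx₂]
    rw [hx]
    exact Submodule.add_mem_sup (Ideal.mem_map_of_mem _ hx₁) (Ideal.mem_map_of_mem _ hx₂)

theorem map_fiberProdInl (hI : I ≤ RingHom.ker f) :
    I.map (fiberProdInl f g) =
      I.comap (fiberProdFst f g) ⊓ (⊥ : Ideal B).comap (fiberProdSnd f g) := by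
  simpa using map_fiberProdInl_sup_map_fiberProdInr (J := ⊥) hI bot_le

theorem map_fiberProdInr (hJ : J ≤ RingHom.ker g) :
    J.map (fiberProdInr f g) =
      (⊥ : Ideal A).comap (fiberProdFst f g) ⊓ J.comap (fiberProdSnd f g) := by
  simpa using map_fiberProdInl_sup_map_fiberProdInr (I := ⊥) bot_le hJ

theorem map_fiberProdInl_inf_map_fiberProdInr (hI : I ≤ RingHom.ker f)
    (hJ : J ≤ RingHom.ker g) :
    I.map (fiberProdInl f g) ⊓ J.map (fiberProdInr f g) = ⊥ := by
  rw [eq_bot_iff, map_fiberProdInl hI, map_fiberProdInr hJ]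
  rintro x ⟨⟨-, hx₂⟩, hx₁, -⟩
  exact Subtype.ext (Prod.ext hx₁ hx₂)

theorem radical_map_fiberProdInl_sup_map_fiberProdInr [IsDomain k]
    (hI : I ≤ RingHom.ker f) (hJ : J ≤ RingHom.ker g) :
    (I.map (fiberProdInl f g) ⊔ J.map (fiberProdInr f g)).radical =
      I.radical.map (fiberProdInl f g) ⊔ J.radical.map (fiberProdInr f g) := by
  rw [map_fiberProdInl_sup_map_fiberProdInr hI hJ, map_fiberProdInl_sup_map_fiberProdInr
    ((RingHom.ker_isPrime f).radical_le_iff.2 hI) ((RingHom.ker_isPrime g).radical_le_iff.2 hJ),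
    Ideal.radical_inf, Ideal.comap_radical, Ideal.comap_radical]

end FiberProd

theorem fiberProd_radical_sup_map_general {k A B : Type*} [Field k] [CommRing A] [CommRing B]
    [Algebra k A] [Algebra k B]
    (𝒜 : ℕ → Submodule k A) (ℬ : ℕ → Submodule k B)
    [GradedAlgebra 𝒜] [GradedAlgebra ℬ]
    (h𝒜 : 𝒜 0 ≤ LinearMap.range (Algebra.linearMap k A))
    (hℬ : ℬ 0 ≤ LinearMap.range (Algebra.linearMap k B))
    (f : A →ₐ[k] k) (g : B →ₐ[k] k)
    (hf : ∀ i, 0 < i → ∀ a ∈ 𝒜 i, f a = 0)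
    (hg : ∀ i, 0 < i → ∀ b ∈ ℬ i, g b = 0)
    (I : Ideal A) (hI : I ≠ ⊤) (hIhom : I.IsHomogeneous 𝒜)
    (J : Ideal B) (hJ : J ≠ ⊤) (hJhom : J.IsHomogeneous ℬ) :
    (Ideal.map (fiberProdInl f g) I ⊔ Ideal.map (fiberProdInr f g) J).radical
        = (Ideal.map (fiberProdInl f g) I).radical ⊔ (Ideal.map (fiberProdInr f g) J).radical ∧
      (Ideal.map (fiberProdInl f g) I).radical ⊔ (Ideal.map (fiberProdInr f g) J).radical
        = Ideal.map (fiberProdInl f g) I.radical ⊔ Ideal.map (fiberProdInr f g) J.radical ∧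
      Ideal.map (fiberProdInl f g) I.radical ⊓ Ideal.map (fiberProdInr f g) J.radical = ⊥ := by
  have hIf : I ≤ RingHom.ker f :=
    (hIhom.le_irrelevant h𝒜 hI).trans (HomogeneousIdeal.irrelevant_le_ker 𝒜 f hf)
  have hJg : J ≤ RingHom.ker g :=
    (hJhom.le_irrelevant hℬ hJ).trans (HomogeneousIdeal.irrelevant_le_ker ℬ g hg)
  have hrad := radical_map_fiberProdInl_sup_map_fiberProdInr hIf hJg
  have hsup : (I.map (fiberProdInl f g)).radical ⊔ (J.map (fiberProdInr f g)).radical =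
      I.radical.map (fiberProdInl f g) ⊔ J.radical.map (fiberProdInr f g) :=
    le_antisymm (hrad ▸ sup_le (Ideal.radical_mono le_sup_left) (Ideal.radical_mono le_sup_right))
      (sup_le_sup (Ideal.map_radical_le _) (Ideal.map_radical_le _))
  exact ⟨hrad.trans hsup.symm, hsup, map_fiberProdInl_inf_map_fiberProdInr
    ((RingHom.ker_isPrime f).radical_le_iff.2 hIf) ((RingHom.ker_isPrime g).radical_le_iff.2 hJg)⟩

/-- With `R = A ×ₖ B` the fiber product of positively graded Noetherian
`k`-algebras over the field `k`, for proper graded ideals `I ⊊ A` and `J ⊊ B`, the radical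
satisfies `√(IR ⊕ JR) = √(IR) ⊕ √(JR) = √I·R ⊕ √J·R`. -/
theorem fiberProd_radical_sup_map {k A B : Type*} [Field k] [CommRing A] [CommRing B]
    [Algebra k A] [Algebra k B] [IsNoetherianRing A] [IsNoetherianRing B]
    (𝒜 : ℕ → Submodule k A) (ℬ : ℕ → Submodule k B)
    [GradedAlgebra 𝒜] [GradedAlgebra ℬ]
    (h𝒜 : 𝒜 0 ≤ LinearMap.range (Algebra.linearMap k A))
    (hℬ : ℬ 0 ≤ LinearMap.range (Algebra.linearMap k B))
    (f : A →ₐ[k] k) (g : B →ₐ[k] k)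
    (hf : ∀ i, 0 < i → ∀ a ∈ 𝒜 i, f a = 0)
    (hg : ∀ i, 0 < i → ∀ b ∈ ℬ i, g b = 0)
    (I : Ideal A) (hI : I ≠ ⊤) (hIhom : I.IsHomogeneous 𝒜)
    (J : Ideal B) (hJ : J ≠ ⊤) (hJhom : J.IsHomogeneous ℬ) :
    (Ideal.map (fiberProdInl f g) I ⊔ Ideal.map (fiberProdInr f g) J).radical
        = (Ideal.map (fiberProdInl f g) I).radical ⊔ (Ideal.map (fiberProdInr f g) J).radical ∧
      (Ideal.map (fiberProdInl f g) I).radical ⊔ (Ideal.map (fiberProdInr f g) J).radical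
        = Ideal.map (fiberProdInl f g) I.radical ⊔ Ideal.map (fiberProdInr f g) J.radical ∧
      Ideal.map (fiberProdInl f g) I.radical ⊓ Ideal.map (fiberProdInr f g) J.radical = ⊥ :=
  fiberProd_radical_sup_map_general 𝒜 ℬ h𝒜 hℬ f g hf hg I hI hIhom J hJ hJhom
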